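/- arXiv:2007.15402 — 6 statements merged into one kernel-verified Lean document; each statement's English description precedes it below -/
import Mathlib

section
/- Let ω be a radial weight (nonnegative integrable function on [0,1)) with tail integral ŵ(r) = ∫_r^1 ω(s) ds > 0 for all r ∈ [0,1). If there exists C ≥ 1 such that ŵ(r) ≤ C·ŵ((1+r)/2) for all 0 ≤ r < 1, then there exist constants C' ≥ 1 and β > 0 such that ŵ(r) ≤ C'·((1-r)/(1-t))^β · ŵ(t) for all 0 ≤ r ≤ t < 1. -/
/-!
As `ω ≥ 0`, the tail `ŵ` is nonincreasing and nonnegative, so the doubling inequality also holds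
with `K = max C 2 > 1`, which makes `β = log₂ K` positive. Iterating it `n` times gives
`ŵ(r) ≤ K ^ n ŵ(1 - (1 - r) / 2 ^ n)`; for `n = ⌈log₂ q⌉` with `q = (1 - r) / (1 - t)` the point
`1 - (1 - r) / 2 ^ n` lies beyond `t`, and `K ^ n ≤ K · q ^ (log₂ K)`.
-/

open MeasureTheory Set

/-- The tail integral of a radial weight. -/
noncomputable def tl (ω : ℝ → ℝ) (r : ℝ) : ℝ := ∫ s in r..1, ω s

theorem Real.rpow_logb_comm {b x y : ℝ} (hb : 0 < b) (hb₁ : b ≠ 1) (hx : 0 < x) (hy : 0 < y) :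
    x ^ Real.logb b y = y ^ Real.logb b x := by
  conv_lhs => rw [← Real.rpow_logb hb hb₁ hx]
  conv_rhs => rw [← Real.rpow_logb hb hb₁ hy]
  rw [← Real.rpow_mul hb.le, ← Real.rpow_mul hb.le, mul_comm]

theorem pow_ceil_logb_two_le {K q : ℝ} (hK : 1 ≤ K) (hq : 1 ≤ q) :
    K ^ ⌈Real.logb 2 q⌉₊ ≤ K * q ^ Real.logb 2 K := by
  have hn : (⌈Real.logb 2 q⌉₊ : ℝ) ≤ Real.logb 2 q + 1 :=
    (Nat.ceil_lt_add_one (Real.logb_nonneg one_lt_two hq)).le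
  calc K ^ ⌈Real.logb 2 q⌉₊ = K ^ (⌈Real.logb 2 q⌉₊ : ℝ) := (Real.rpow_natCast K _).symm
    _ ≤ K ^ (Real.logb 2 q + 1) := Real.rpow_le_rpow_of_exponent_le hK hn
    _ = K * q ^ Real.logb 2 K := by
      rw [Real.rpow_add_one (by linarith), mul_comm,
        Real.rpow_logb_comm two_pos (by norm_num) (by linarith) (by linarith)]

section Doubling

variable {f : ℝ → ℝ} {K : ℝ}

theorem le_pow_mul_of_doubling (hK : 0 ≤ K)
    (hf : ∀ r ∈ Ico (0:ℝ) 1, f r ≤ K * f ((1 + r) / 2)) (n : ℕ) {r : ℝ} (hr : r ∈ Ico (0:ℝ) 1) :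
    f r ≤ K ^ n * f (1 - (1 - r) / 2 ^ n) := by
  induction n with
  | zero => simp
  | succ n ih =>
    have hmem : 1 - (1 - r) / 2 ^ n ∈ Ico (0:ℝ) 1 := by
      have hle : (1 - r) / 2 ^ n ≤ 1 - r :=
        div_le_self (by linarith [hr.2]) (one_le_pow₀ one_le_two)
      have hpos : 0 < (1 - r) / 2 ^ n := div_pos (by linarith [hr.2]) (by positivity)
      constructor <;> linarith [hr.1]
    have hmid : (1 + (1 - (1 - r) / 2 ^ n)) / 2 = 1 - (1 - r) / 2 ^ (n + 1) := by
      field_simp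
      ring
    calc f r ≤ K ^ n * f (1 - (1 - r) / 2 ^ n) := ih
      _ ≤ K ^ n * (K * f (1 - (1 - r) / 2 ^ (n + 1))) := by
        rw [← hmid]
        exact mul_le_mul_of_nonneg_left (hf _ hmem) (by positivity)
      _ = K ^ (n + 1) * f (1 - (1 - r) / 2 ^ (n + 1)) := by ring

theorem le_mul_rpow_mul_of_doubling (hK : 1 ≤ K) (hanti : AntitoneOn f (Ico (0:ℝ) 1))
    (hf : ∀ r ∈ Ico (0:ℝ) 1, f r ≤ K * f ((1 + r) / 2)) {r t : ℝ} (hr : 0 ≤ r) (hrt : r ≤ t)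
    (ht : t < 1) (hft : 0 ≤ f t) :
    f r ≤ K * ((1 - r) / (1 - t)) ^ Real.logb 2 K * f t := by
  set q := (1 - r) / (1 - t)
  set n := ⌈Real.logb 2 q⌉₊
  have h1t : 0 < 1 - t := by linarith
  have hq : 1 ≤ q := (le_div_iff₀ h1t).2 (by linarith)
  have hqn : q ≤ 2 ^ n := by
    rw [← Real.rpow_natCast, ← Real.logb_le_iff_le_rpow one_lt_two (by linarith)]
    exact Nat.le_ceil _
  have hsn : (1 - r) / 2 ^ n ≤ 1 - t := by
    rw [div_le_iff₀ (by positivity), mul_comm]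
    exact (div_le_iff₀ h1t).1 hqn
  have hsn_pos : 0 < (1 - r) / 2 ^ n := div_pos (by linarith) (by positivity)
  calc f r ≤ K ^ n * f (1 - (1 - r) / 2 ^ n) :=
        le_pow_mul_of_doubling (by linarith) hf n ⟨hr, by linarith⟩
    _ ≤ K ^ n * f t := by
      refine mul_le_mul_of_nonneg_left (hanti ⟨hr.trans hrt, ht⟩ ?_ (by linarith)) (by positivity)
      constructor <;> linarith
    _ ≤ K * q ^ Real.logb 2 K * f t := mul_le_mul_of_nonneg_right (pow_ceil_logb_two_le hK hq) hft

end Doubling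

section TailIntegral

variable {ω : ℝ → ℝ}

theorem antitoneOn_tl (hnn : ∀ t ∈ Ico (0:ℝ) 1, 0 ≤ ω t) (hint : IntegrableOn ω (Ico (0:ℝ) 1)) :
    AntitoneOn (tl ω) (Icc (0:ℝ) 1) := by
  have hint' : IntegrableOn ω (Icc (0:ℝ) 1) := (integrableOn_Icc_iff_integrableOn_Ico).2 hint
  intro a ha b hb hab
  have hab_int : ∫ s in a..b, ω s = ∫ s in Ioo a b, ω s := by
    rw [intervalIntegral.integral_of_le hab, integral_Ioc_eq_integral_Ioo]
  have hab_nonneg : 0 ≤ ∫ s in a..b, ω s := by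
    rw [hab_int]
    exact setIntegral_nonneg measurableSet_Ioo
      fun s hs => hnn s ⟨ha.1.trans hs.1.le, hs.2.trans_le hb.2⟩
  have hsplit : tl ω a = (∫ s in a..b, ω s) + tl ω b :=
    (intervalIntegral.integral_add_adjacent_intervals
      (hint'.mono_set (uIcc_subset_Icc ha hb)).intervalIntegrable
      (hint'.mono_set (uIcc_subset_Icc hb ⟨zero_le_one, le_rfl⟩)).intervalIntegrable).symm
  linarith

theorem tl_nonneg (hnn : ∀ t ∈ Ico (0:ℝ) 1, 0 ≤ ω t) (hint : IntegrableOn ω (Ico (0:ℝ) 1))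
    {t : ℝ} (ht : t ∈ Icc (0:ℝ) 1) : 0 ≤ tl ω t := by
  have h1 : tl ω 1 = 0 := intervalIntegral.integral_same
  exact h1 ▸ antitoneOn_tl hnn hint ht ⟨zero_le_one, le_rfl⟩ ht.2

end TailIntegral

theorem stmt0_general (ω : ℝ → ℝ)
    (hnn : ∀ t ∈ Ico (0:ℝ) 1, 0 ≤ ω t)
    (hint : IntegrableOn ω (Ico (0:ℝ) 1))
    (C : ℝ)
    (hdbl : ∀ r ∈ Ico (0:ℝ) 1, tl ω r ≤ C * tl ω ((1 + r) / 2)) :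
    ∃ C' ≥ (1:ℝ), ∃ β > (0:ℝ), ∀ r t : ℝ, 0 ≤ r → r ≤ t → t < 1 →
      tl ω r ≤ C' * ((1 - r) / (1 - t)) ^ β * tl ω t := by
  set K := max C 2
  have hK : 2 ≤ K := le_max_right C 2
  have hdblK : ∀ r ∈ Ico (0:ℝ) 1, tl ω r ≤ K * tl ω ((1 + r) / 2) := fun r hr =>
    (hdbl r hr).trans <| mul_le_mul_of_nonneg_right (le_max_left C 2) <|
      tl_nonneg hnn hint ⟨by linarith [hr.1], by linarith [hr.2]⟩
  refine ⟨K, by linarith, Real.logb 2 K, Real.logb_pos one_lt_two (by linarith), ?_⟩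
  intro r t hr hrt ht
  exact le_mul_rpow_mul_of_doubling (by linarith) ((antitoneOn_tl hnn hint).mono Ico_subset_Icc_self)
    hdblK hr hrt ht (tl_nonneg hnn hint ⟨hr.trans hrt, ht.le⟩)

theorem stmt0 (ω : ℝ → ℝ)
    (hnn : ∀ t ∈ Ico (0:ℝ) 1, 0 ≤ ω t)
    (hint : IntegrableOn ω (Ico (0:ℝ) 1))
    (hpos : ∀ r ∈ Ico (0:ℝ) 1, 0 < tl ω r)
    (C : ℝ) (hC : 1 ≤ C)
    (hdbl : ∀ r ∈ Ico (0:ℝ) 1, tl ω r ≤ C * tl ω ((1 + r) / 2)) :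
    ∃ C' ≥ (1:ℝ), ∃ β > (0:ℝ), ∀ r t : ℝ, 0 ≤ r → r ≤ t → t < 1 →
      tl ω r ≤ C' * ((1 - r) / (1 - t)) ^ β * tl ω t :=
  stmt0_general ω hnn hint C hdbl
end

section
/- Let ω be a nonnegative integrable function on [0,1) with positive tail integrals. If there is a constant C ≥ 1 with ŵ(r) ≤ C·ŵ((1+r)/2) for all 0 ≤ r < 1, then there exists a constant C' > 0 such that ω_n ≤ C'·ω_{2n} for all natural numbers n ≥ 1, where ω_x = ∫_0^1 s^x ω(s) ds. -/
/-!
Fubini turns the moments into weighted integrals of the tail: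
`ω_{m+1} = (m+1) ∫₀¹ t^m ŵ(t) dt`. The doubling condition bounds `t^m ŵ(t)` by
`C t^m ŵ((1+t)/2)`, and AM–GM (`t ≤ ((1+t)/2)²`) gives `t^m ≤ 2 ((1+t)/2)^(2m+1)`;
the substitution `u = (1+t)/2` then yields `∫₀¹ t^m ŵ ≤ 4C ∫₀¹ u^(2m+1) ŵ`,
that is `ω_{m+1} ≤ 2C ω_{2m+2}`.
-/

open MeasureTheory Set

/-- The moments of a radial weight. -/
noncomputable def mom (ω : ℝ → ℝ) (n : ℕ) : ℝ := ∫ s in (0:ℝ)..1, s ^ n * ω s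

theorem integral_primitive_mul_eq_integral_mul_tail {a b : ℝ} (hab : a ≤ b) {f ω : ℝ → ℝ}
    (hf : IntervalIntegrable f volume a b) (hω : IntervalIntegrable ω volume a b) :
    ∫ s in a..b, (∫ t in a..s, f t) * ω s = ∫ t in a..b, f t * ∫ s in t..b, ω s := by
  set F : ℝ → ℝ → ℝ := fun s t => if t ≤ s then ω s * f t else 0
  have hF : IntegrableOn (Function.uncurry F) (uIoc a b ×ˢ uIoc a b) := by
    have hprod := hω.1.mul_prod hf.1
    rw [Measure.prod_restrict, ← Measure.volume_eq_prod, ← uIoc_of_le hab] at hprod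
    have hF_eq :
        Function.uncurry F = {p : ℝ × ℝ | p.2 ≤ p.1}.indicator fun p => ω p.1 * f p.2 := by
      ext ⟨s, t⟩; simp [F, indicator]
    rw [hF_eq]
    exact hprod.indicator (measurableSet_le measurable_snd measurable_fst)
  have inner_left : ∀ s ∈ Ioc a b, ∫ t in a..b, F s t = (∫ t in a..s, f t) * ω s := by
    intro s hs
    have hFs : F s = (Iic s).indicator fun t => ω s * f t := by ext t; simp [F, indicator]
    rw [hFs, intervalIntegral.integral_of_le hab, intervalIntegral.integral_of_le hs.1.le,
      integral_indicator measurableSet_Iic, Measure.restrict_restrict measurableSet_Iic,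
      inter_comm, Ioc_inter_Iic, min_eq_right hs.2, integral_const_mul, mul_comm]
  have inner_right : ∀ t ∈ Ioc a b, ∫ s in a..b, F s t = f t * ∫ s in t..b, ω s := by
    intro t ht
    have hFt : (F · t) = (Ici t).indicator fun s => ω s * f t := by ext s; simp [F, indicator]
    have hset : Ici t ∩ Ioc a b = Icc t b := by
      ext s; simp only [mem_inter_iff, mem_Ici, mem_Ioc, mem_Icc]
      constructor
      · rintro ⟨hts, -, hsb⟩; exact ⟨hts, hsb⟩
      · rintro ⟨hts, hsb⟩; exact ⟨hts, ht.1.trans_le hts, hsb⟩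
    rw [hFt, intervalIntegral.integral_of_le hab, intervalIntegral.integral_of_le ht.2,
      integral_indicator measurableSet_Ici, Measure.restrict_restrict measurableSet_Ici, hset,
      integral_Icc_eq_integral_Ioc, integral_mul_const, mul_comm]
  calc ∫ s in a..b, (∫ t in a..s, f t) * ω s = ∫ s in a..b, ∫ t in a..b, F s t :=
        intervalIntegral.integral_congr_ae (.of_forall fun s hs => by
          rw [uIoc_of_le hab] at hs; exact (inner_left s hs).symm)
    _ = ∫ t in a..b, ∫ s in a..b, F s t := intervalIntegral_intervalIntegral_swap hF
    _ = ∫ t in a..b, f t * ∫ s in t..b, ω s :=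
        intervalIntegral.integral_congr_ae (.of_forall fun t ht => by
          rw [uIoc_of_le hab] at ht; exact inner_right t ht)

theorem mom_succ_eq_integral_pow_mul_tl {ω : ℝ → ℝ} (hω : IntervalIntegrable ω volume 0 1)
    (n : ℕ) :
    mom ω (n + 1) = (n + 1) * ∫ t in (0:ℝ)..1, t ^ n * tl ω t := by
  have hpow : ∀ s : ℝ, s ^ (n + 1) = ∫ t in (0:ℝ)..s, ((n : ℝ) + 1) * t ^ n := by
    intro s
    rw [intervalIntegral.integral_const_mul, integral_pow]
    field_simp
    simp
  have hcont : Continuous fun t : ℝ => ((n : ℝ) + 1) * t ^ n := by fun_prop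
  calc mom ω (n + 1)
        = ∫ s in (0:ℝ)..1, (∫ t in (0:ℝ)..s, ((n : ℝ) + 1) * t ^ n) * ω s := by
          simp only [mom, ← hpow]
    _ = ∫ t in (0:ℝ)..1, ((n : ℝ) + 1) * t ^ n * tl ω t :=
        integral_primitive_mul_eq_integral_mul_tail zero_le_one (hcont.intervalIntegrable 0 1) hω
    _ = (n + 1) * ∫ t in (0:ℝ)..1, t ^ n * tl ω t := by
        simp only [mul_assoc, intervalIntegral.integral_const_mul]

theorem pow_le_two_mul_midpoint_pow {t : ℝ} (ht : 0 ≤ t) (m : ℕ) :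
    t ^ m ≤ 2 * ((1 + t) / 2) ^ (2 * m + 1) := by
  have amgm : t ≤ ((1 + t) / 2) ^ 2 := by nlinarith [sq_nonneg (1 - t)]
  have hmid : 0 ≤ ((1 + t) / 2) ^ (2 * m) := by positivity
  calc t ^ m ≤ (((1 + t) / 2) ^ 2) ^ m := pow_le_pow_left₀ ht amgm m
    _ = ((1 + t) / 2) ^ (2 * m) := by rw [← pow_mul]
    _ ≤ 2 * ((1 + t) / 2) ^ (2 * m + 1) := by rw [pow_succ]; nlinarith

theorem integral_comp_one_add_div_two_le {h : ℝ → ℝ} (hint : IntervalIntegrable h volume 0 1)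
    (hnonneg : ∀ u ∈ Icc (0:ℝ) (1 / 2), 0 ≤ h u) :
    ∫ t in (0:ℝ)..1, h ((1 + t) / 2) ≤ 2 * ∫ u in (0:ℝ)..1, h u := by
  have hsubst : ∫ t in (0:ℝ)..1, h ((1 + t) / 2) = 2 * ∫ u in (1 / 2 : ℝ)..1, h u :=
    calc ∫ t in (0:ℝ)..1, h ((1 + t) / 2) = ∫ t in (0:ℝ)..1, h (t / 2 + 1 / 2) := by
          congr 1; funext t; ring_nf
      _ = 2 • ∫ u in (0 / 2 + 1 / 2 : ℝ)..(1 / 2 + 1 / 2), h u :=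
          intervalIntegral.integral_comp_div_add h two_ne_zero _
      _ = 2 * ∫ u in (1 / 2 : ℝ)..1, h u := by norm_num
  have hsplit := intervalIntegral.integral_add_adjacent_intervals (a := 0) (b := 1 / 2) (c := 1)
    (hint.mono_set (by rw [uIcc_of_le (by norm_num), uIcc_of_le zero_le_one]
                       exact Icc_subset_Icc le_rfl (by norm_num)))
    (hint.mono_set (by rw [uIcc_of_le (by norm_num), uIcc_of_le zero_le_one]
                       exact Icc_subset_Icc (by norm_num) le_rfl))
  have hleft := intervalIntegral.integral_nonneg (μ := volume) (by norm_num) hnonneg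
  linarith

theorem integral_pow_mul_le_of_doubling {g : ℝ → ℝ} {C : ℝ} (hC : 0 ≤ C)
    (hcont : ContinuousOn g (Icc 0 1)) (hg : ∀ t ∈ Ico (0:ℝ) 1, 0 ≤ g t)
    (hdbl : ∀ t ∈ Ico (0:ℝ) 1, g t ≤ C * g ((1 + t) / 2)) (m : ℕ) :
    ∫ t in (0:ℝ)..1, t ^ m * g t ≤ 4 * C * ∫ t in (0:ℝ)..1, t ^ (2 * m + 1) * g t := by
  set h : ℝ → ℝ := fun u => u ^ (2 * m + 1) * g u
  have hmid : MapsTo (fun t : ℝ => (1 + t) / 2) (Icc 0 1) (Icc 0 1) :=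
    fun t ht => ⟨by linarith [ht.1], by linarith [ht.2]⟩
  have hh : ContinuousOn h (Icc 0 1) := (continuousOn_pow _).mul hcont
  have pointwise : ∀ t ∈ Ioo (0:ℝ) 1, t ^ m * g t ≤ 2 * C * h ((1 + t) / 2) := by
    intro t ht
    have hgmid : 0 ≤ g ((1 + t) / 2) := hg _ ⟨by linarith [ht.1], by linarith [ht.2]⟩
    calc t ^ m * g t ≤ t ^ m * (C * g ((1 + t) / 2)) := by
          gcongr
          · exact pow_nonneg ht.1.le m
          · exact hdbl t (Ioo_subset_Ico_self ht)
      _ ≤ 2 * ((1 + t) / 2) ^ (2 * m + 1) * (C * g ((1 + t) / 2)) := by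
          gcongr; exact pow_le_two_mul_midpoint_pow ht.1.le m
      _ = 2 * C * h ((1 + t) / 2) := by ring
  calc ∫ t in (0:ℝ)..1, t ^ m * g t ≤ ∫ t in (0:ℝ)..1, 2 * C * h ((1 + t) / 2) :=
        intervalIntegral.integral_mono_on_of_le_Ioo zero_le_one
          (((continuousOn_pow m).mul hcont).intervalIntegrable_of_Icc zero_le_one)
          (((hh.comp (by fun_prop) hmid).const_smul (2 * C)).intervalIntegrable_of_Icc zero_le_one)
          pointwise
    _ = 2 * C * ∫ t in (0:ℝ)..1, h ((1 + t) / 2) := intervalIntegral.integral_const_mul _ _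
    _ ≤ 2 * C * (2 * ∫ u in (0:ℝ)..1, h u) := by
        gcongr
        exact integral_comp_one_add_div_two_le (hh.intervalIntegrable_of_Icc zero_le_one)
          fun u hu => mul_nonneg (pow_nonneg hu.1 _) (hg u ⟨hu.1, by linarith [hu.2]⟩)
    _ = 4 * C * ∫ t in (0:ℝ)..1, t ^ (2 * m + 1) * g t := by ring

theorem stmt2_general (ω : ℝ → ℝ)
    (hint : IntegrableOn ω (Ico (0:ℝ) 1))
    (hpos : ∀ r ∈ Ico (0:ℝ) 1, 0 < tl ω r)
    (C : ℝ) (hC : 1 ≤ C)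
    (hdbl : ∀ r ∈ Ico (0:ℝ) 1, tl ω r ≤ C * tl ω ((1 + r) / 2)) :
    ∃ C' > (0:ℝ), ∀ n : ℕ, 1 ≤ n → mom ω n ≤ C' * mom ω (2 * n) := by
  have hω : IntervalIntegrable ω volume 0 1 :=
    (intervalIntegrable_iff_integrableOn_Ico_of_le zero_le_one).2 hint
  have htl : ContinuousOn (tl ω) (Icc 0 1) := by
    have h := intervalIntegral.continuousOn_primitive_interval_left
      ((intervalIntegrable_iff' (by finiteness)).1 hω)
    rwa [uIcc_of_le zero_le_one] at h
  refine ⟨2 * C, by positivity, fun n hn => ?_⟩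
  obtain ⟨m, rfl⟩ := Nat.exists_eq_add_of_le' hn
  have key := integral_pow_mul_le_of_doubling (by positivity) htl (fun r hr => (hpos r hr).le)
    hdbl m
  rw [show 2 * (m + 1) = (2 * m + 1) + 1 by ring, mom_succ_eq_integral_pow_mul_tl hω,
    mom_succ_eq_integral_pow_mul_tl hω]
  push_cast
  calc ((m : ℝ) + 1) * ∫ t in (0:ℝ)..1, t ^ m * tl ω t
      ≤ (m + 1) * (4 * C * ∫ t in (0:ℝ)..1, t ^ (2 * m + 1) * tl ω t) :=
        mul_le_mul_of_nonneg_left key (by positivity)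
    _ = 2 * C * ((2 * m + 1 + 1) * ∫ t in (0:ℝ)..1, t ^ (2 * m + 1) * tl ω t) := by ring

theorem stmt2 (ω : ℝ → ℝ)
    (hnn : ∀ t ∈ Ico (0:ℝ) 1, 0 ≤ ω t)
    (hint : IntegrableOn ω (Ico (0:ℝ) 1))
    (hpos : ∀ r ∈ Ico (0:ℝ) 1, 0 < tl ω r)
    (C : ℝ) (hC : 1 ≤ C)
    (hdbl : ∀ r ∈ Ico (0:ℝ) 1, tl ω r ≤ C * tl ω ((1 + r) / 2)) :
    ∃ C' > (0:ℝ), ∀ n : ℕ, 1 ≤ n → mom ω n ≤ C' * mom ω (2 * n) :=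
  stmt2_general ω hint hpos C hC hdbl
end

section
/- Let ω be a nonnegative integrable function on [0,1) with positive tail integrals and moments ω_x = ∫_0^1 s^x ω(s) ds. If there is a constant C > 0 such that ω_n ≤ C·ω_{2n} for all n ∈ ℕ, n ≥ 1, then ω satisfies the doubling condition: there is C' ≥ 1 with ŵ(r) ≤ C'·ŵ((1+r)/2) for all 0 ≤ r < 1. -/
open MeasureTheory Set

lemma exp_neg_two_le (x : ℝ) (hx : 0 ≤ x) (hx2 : x ≤ 1/2) :
    Real.exp (-(2*x)) ≤ 1 - x := by
  have h := convexOn_exp.2 (mem_univ (-1:ℝ)) (mem_univ (0:ℝ))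
    (show (0:ℝ) ≤ 2*x by linarith) (show (0:ℝ) ≤ 1-2*x by linarith) (by ring)
  simp only [smul_eq_mul] at h
  have harg : 2*x * (-1:ℝ) + (1-2*x) * 0 = -(2*x) := by ring
  rw [harg, Real.exp_zero] at h
  have h2 : Real.exp (-1) ≤ 1/2 := by
    rw [Real.exp_neg, inv_le_comm₀ (Real.exp_pos 1) (by norm_num)]
    have := Real.add_one_le_exp (1:ℝ)
    linarith
  nlinarith [Real.exp_pos (-1:ℝ)]

theorem stmt3 (ω : ℝ → ℝ)
    (hnn : ∀ t ∈ Ico (0:ℝ) 1, 0 ≤ ω t)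
    (hint : IntegrableOn ω (Ico (0:ℝ) 1))
    (hpos : ∀ r ∈ Ico (0:ℝ) 1, 0 < tl ω r)
    (C : ℝ) (hC : 0 < C)
    (hmom : ∀ n : ℕ, 1 ≤ n → mom ω n ≤ C * mom ω (2 * n)) :
    ∃ C' ≥ (1:ℝ), ∀ r ∈ Ico (0:ℝ) 1, tl ω r ≤ C' * tl ω ((1 + r) / 2) := by
  classical
  set ω' : ℝ → ℝ := (Ico (0:ℝ) 1).indicator ω with hω'def
  have hω'nn : ∀ s, 0 ≤ ω' s := by
    intro s
    by_cases h : s ∈ Ico (0:ℝ) 1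
    · rw [hω'def, indicator_of_mem h]; exact hnn s h
    · rw [hω'def, indicator_of_notMem h]
  have hω'int : Integrable ω' := (integrable_indicator_iff measurableSet_Ico).2 hint
  have hgeq : ∀ n : ℕ, (fun s : ℝ => s ^ n * ω' s)
      = (Ico (0:ℝ) 1).indicator (fun s => s ^ n * ω s) := by
    intro n; funext s
    by_cases h : s ∈ Ico (0:ℝ) 1 <;>
      simp [hω'def, indicator_apply, h]
  have hgint : ∀ n : ℕ, Integrable (fun s : ℝ => s ^ n * ω' s) := by
    intro n
    rw [hgeq n]
    refine (integrable_indicator_iff measurableSet_Ico).2 ?_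
    refine Integrable.bdd_mul (c := 1) hint
      ((continuous_pow n).aestronglyMeasurable.restrict) ?_
    filter_upwards [ae_restrict_mem measurableSet_Ico] with x hx
    rw [Real.norm_eq_abs, abs_of_nonneg (pow_nonneg hx.1 n)]
    exact pow_le_one₀ hx.1 hx.2.le
  -- a.e. s ≠ 1
  have hae1 : ∀ᵐ s : ℝ, s ≠ (1:ℝ) := by
    rw [ae_iff]
    simp only [not_not, setOf_eq_eq_singleton]
    exact Real.volume_singleton
  -- tl in terms of ω'
  have Htl : ∀ r : ℝ, 0 ≤ r → r ≤ 1 → tl ω r = ∫ s in r..1, ω' s := by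
    intro r hr0 hr1
    refine intervalIntegral.integral_congr_ae ?_
    filter_upwards [hae1] with s hs hmem
    rw [uIoc_of_le hr1] at hmem
    have : s ∈ Ico (0:ℝ) 1 := ⟨le_trans hr0 hmem.1.le, lt_of_le_of_ne hmem.2 hs⟩
    rw [hω'def, indicator_of_mem this]
  have Hmom : ∀ n : ℕ, mom ω n = ∫ s in (0:ℝ)..1, s ^ n * ω' s := by
    intro n
    refine intervalIntegral.integral_congr_ae ?_
    filter_upwards [hae1] with s hs hmem
    rw [uIoc_of_le (zero_le_one)] at hmem
    have : s ∈ Ico (0:ℝ) 1 := ⟨hmem.1.le, lt_of_le_of_ne hmem.2 hs⟩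
    rw [hω'def, indicator_of_mem this]
  have hII : ∀ a b : ℝ, IntervalIntegrable ω' volume a b :=
    fun a b => hω'int.intervalIntegrable
  have hgII : ∀ (n : ℕ) (a b : ℝ), IntervalIntegrable (fun s : ℝ => s ^ n * ω' s) volume a b :=
    fun n a b => (hgint n).intervalIntegrable
  -- antitone of the tail
  have Hmono : ∀ a b : ℝ, a ≤ b → (∫ s in b..1, ω' s) ≤ ∫ s in a..1, ω' s := by
    intro a b hab
    rw [← intervalIntegral.integral_add_adjacent_intervals (hII a b) (hII b 1)]
    have : 0 ≤ ∫ s in a..b, ω' s :=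
      intervalIntegral.integral_nonneg hab (fun s _ => hω'nn s)
    linarith
  -- (E1) : u^m * W u ≤ M m
  have E1 : ∀ (m : ℕ) (u : ℝ), 0 ≤ u → u ≤ 1 →
      u ^ m * (∫ s in u..1, ω' s) ≤ ∫ s in (0:ℝ)..1, s ^ m * ω' s := by
    intro m u hu0 hu1
    rw [← intervalIntegral.integral_const_mul]
    have step1 : (∫ s in u..1, u ^ m * ω' s) ≤ ∫ s in u..1, s ^ m * ω' s := by
      refine intervalIntegral.integral_mono_on hu1 ((hII u 1).const_mul _) (hgII m u 1) ?_
      intro s hs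
      exact mul_le_mul_of_nonneg_right (pow_le_pow_left₀ hu0 hs.1 m) (hω'nn s)
    have step2 : (∫ s in u..1, s ^ m * ω' s) ≤ ∫ s in (0:ℝ)..1, s ^ m * ω' s := by
      rw [← intervalIntegral.integral_add_adjacent_intervals (hgII m 0 u) (hgII m u 1)]
      have : 0 ≤ ∫ s in (0:ℝ)..u, s ^ m * ω' s :=
        intervalIntegral.integral_nonneg hu0
          (fun s hs => mul_nonneg (pow_nonneg hs.1 m) (hω'nn s))
      linarith
    linarith
  -- (E2) : M (2n) ≤ ρ^n * M n + W ρ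
  have E2 : ∀ (n : ℕ) (ρ : ℝ), 0 ≤ ρ → ρ ≤ 1 →
      (∫ s in (0:ℝ)..1, s ^ (2*n) * ω' s)
        ≤ ρ ^ n * (∫ s in (0:ℝ)..1, s ^ n * ω' s) + ∫ s in ρ..1, ω' s := by
    intro n ρ hρ0 hρ1
    rw [← intervalIntegral.integral_add_adjacent_intervals (hgII (2*n) 0 ρ) (hgII (2*n) ρ 1)]
    have part1 : (∫ s in (0:ℝ)..ρ, s ^ (2*n) * ω' s)
        ≤ ρ ^ n * ∫ s in (0:ℝ)..1, s ^ n * ω' s := by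
      have s1 : (∫ s in (0:ℝ)..ρ, s ^ (2*n) * ω' s)
          ≤ ∫ s in (0:ℝ)..ρ, ρ ^ n * (s ^ n * ω' s) := by
        refine intervalIntegral.integral_mono_on hρ0 (hgII (2*n) 0 ρ)
          ((hgII n 0 ρ).const_mul _) ?_
        intro s hs
        have : s ^ (2*n) = s ^ n * s ^ n := by rw [two_mul, pow_add]
        rw [this, mul_assoc]
        exact mul_le_mul_of_nonneg_right (pow_le_pow_left₀ hs.1 hs.2 n)
          (mul_nonneg (pow_nonneg hs.1 n) (hω'nn s))
      rw [intervalIntegral.integral_const_mul] at s1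
      refine s1.trans ?_
      refine mul_le_mul_of_nonneg_left ?_ (pow_nonneg hρ0 n)
      rw [← intervalIntegral.integral_add_adjacent_intervals (hgII n 0 ρ) (hgII n ρ 1)]
      have : 0 ≤ ∫ s in ρ..1, s ^ n * ω' s :=
        intervalIntegral.integral_nonneg hρ1
          (fun s hs => mul_nonneg (pow_nonneg (le_trans hρ0 hs.1) n) (hω'nn s))
      linarith
    have part2 : (∫ s in ρ..1, s ^ (2*n) * ω' s) ≤ ∫ s in ρ..1, ω' s := by
      refine intervalIntegral.integral_mono_on hρ1 (hgII (2*n) ρ 1) (hII ρ 1) ?_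
      intro s hs
      nth_rewrite 2 [← one_mul (ω' s)]
      exact mul_le_mul_of_nonneg_right
        (pow_le_one₀ (le_trans hρ0 hs.1) hs.2) (hω'nn s)
    linarith
  -- constants
  set K : ℝ := max (2 * Real.log (2*C)) 1 with hKdef
  have hK1 : (1:ℝ) ≤ K := le_max_right _ _
  have hK0 : (0:ℝ) < K := by linarith
  have hCK : C * Real.exp (-(K/2)) ≤ 1/2 := by
    have h1 : Real.log (2*C) ≤ K/2 := by
      have := le_max_left (2 * Real.log (2*C)) 1
      linarith
    have h2 : 2*C ≤ Real.exp (K/2) := by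
      calc 2*C = Real.exp (Real.log (2*C)) := (Real.exp_log (by linarith)).symm
        _ ≤ Real.exp (K/2) := Real.exp_le_exp.2 h1
    rw [Real.exp_neg]
    rw [mul_inv_le_iff₀ (Real.exp_pos _)]
    linarith
  set B : ℝ := Real.exp (2*K+2) with hBdef
  have hB1 : (1:ℝ) ≤ B := by
    rw [hBdef, ← Real.exp_zero]
    exact Real.exp_le_exp.2 (by linarith)
  have hBinv : Real.exp (-(2*K+2)) * B = 1 := by
    have harg : (-(2*K+2)) + (2*K+2) = 0 := by ring
    rw [hBdef, ← Real.exp_add, harg, Real.exp_zero]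
  clear_value B
  set A : ℝ := tl ω 0 / tl ω (3/4) with hAdef
  have h34pos : 0 < tl ω (3/4) := hpos (3/4) (by norm_num)
  refine ⟨max (2*C*B) (max 1 A), le_trans (le_max_left 1 A) (le_max_right _ _), ?_⟩
  intro r hr
  obtain ⟨hr0, hr1⟩ := hr
  set ρ : ℝ := (1 + r)/2 with hρdef
  have hρ0 : (0:ℝ) ≤ ρ := by rw [hρdef]; linarith
  have hρ1 : ρ < 1 := by rw [hρdef]; linarith
  have hWρpos : 0 < tl ω ρ := hpos ρ ⟨hρ0, hρ1⟩
  by_cases hhalf : r < 1/2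
  · -- easy branch
    have hρ34 : ρ ≤ 3/4 := by rw [hρdef]; linarith
    have h1 : tl ω r ≤ tl ω 0 := by
      rw [Htl r hr0 hr1.le, Htl 0 le_rfl zero_le_one]
      exact Hmono 0 r hr0
    have h2 : tl ω (3/4) ≤ tl ω ρ := by
      rw [Htl _ (by norm_num) (by norm_num), Htl ρ hρ0 hρ1.le]
      exact Hmono ρ (3/4) hρ34
    have hA : tl ω 0 = A * tl ω (3/4) := by
      rw [hAdef, div_mul_cancel₀]
      exact h34pos.ne'
    have hA0 : 0 ≤ A := by
      rw [hAdef]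
      exact div_nonneg (le_of_lt (hpos 0 (by norm_num))) h34pos.le
    have hAC' : A ≤ max (2*C*B) (max 1 A) :=
      le_trans (le_max_right 1 A) (le_max_right _ _)
    calc tl ω r ≤ tl ω 0 := h1
      _ = A * tl ω (3/4) := hA
      _ ≤ A * tl ω ρ := mul_le_mul_of_nonneg_left h2 hA0
      _ ≤ max (2*C*B) (max 1 A) * tl ω ρ :=
          mul_le_mul_of_nonneg_right hAC' hWρpos.le
  · -- main branch : 1/2 ≤ r < 1
    push_neg at hhalf
    have h1r : 0 < 1 - r := by linarith
    set n : ℕ := ⌈K / (1-r)⌉₊ with hndef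
    have hKr : 0 < K / (1-r) := div_pos hK0 h1r
    have hn1 : 1 ≤ n := Nat.one_le_ceil_iff.2 hKr
    have hn_low : K / (1-r) ≤ (n:ℝ) := Nat.le_ceil _
    have hn_up : (n:ℝ) ≤ K / (1-r) + 1 := (Nat.ceil_lt_add_one hKr.le).le
    clear_value n
    have hnK : K ≤ (n:ℝ) * (1-r) := by
      rw [div_le_iff₀ h1r] at hn_low; linarith
    have hnK' : (n:ℝ) * (1-r) ≤ K + 1 := by
      have := mul_le_mul_of_nonneg_right hn_up h1r.le
      rw [add_mul, div_mul_cancel₀ _ h1r.ne'] at this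
      linarith
    -- ρ^n ≤ exp(-K/2)
    have hρpow : ρ ^ n ≤ Real.exp (-(K/2)) := by
      have h1 : ρ ≤ Real.exp (-((1-r)/2)) := by
        have := Real.add_one_le_exp (-((1-r)/2))
        rw [hρdef]; linarith
      calc ρ ^ n ≤ Real.exp (-((1-r)/2)) ^ n := pow_le_pow_left₀ hρ0 h1 n
        _ = Real.exp ((n:ℝ) * -((1-r)/2)) := (Real.exp_nat_mul _ n).symm
        _ ≤ Real.exp (-(K/2)) := Real.exp_le_exp.2 (by nlinarith)
    -- r^n ≥ exp(-(2K+2))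
    have hrpow : Real.exp (-(2*K+2)) ≤ r ^ n := by
      have h1 : Real.exp (-(2*(1-r))) ≤ r := by
        have := exp_neg_two_le (1-r) h1r.le (by linarith)
        linarith
      calc Real.exp (-(2*K+2)) ≤ Real.exp ((n:ℝ) * -(2*(1-r))) :=
            Real.exp_le_exp.2 (by nlinarith)
        _ = Real.exp (-(2*(1-r))) ^ n := Real.exp_nat_mul _ n
        _ ≤ r ^ n := pow_le_pow_left₀ (Real.exp_pos _).le h1 n
    -- main chain
    have hMn_nonneg : 0 ≤ ∫ s in (0:ℝ)..1, s ^ n * ω' s :=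
      intervalIntegral.integral_nonneg zero_le_one
        (fun s hs => mul_nonneg (pow_nonneg hs.1 n) (hω'nn s))
    have hmom' : (∫ s in (0:ℝ)..1, s ^ n * ω' s)
        ≤ C * ∫ s in (0:ℝ)..1, s ^ (2*n) * ω' s := by
      rw [← Hmom n, ← Hmom (2*n)]; exact hmom n hn1
    have hE2 := E2 n ρ hρ0 hρ1.le
    have hWρ : tl ω ρ = ∫ s in ρ..1, ω' s := Htl ρ hρ0 hρ1.le
    -- M n ≤ 2C * W ρ
    have hkey : (∫ s in (0:ℝ)..1, s ^ n * ω' s) ≤ 2*C * tl ω ρ := by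
      rw [hWρ]
      have hCρ : C * ρ ^ n ≤ 1/2 := by
        have := mul_le_mul_of_nonneg_left hρpow hC.le
        linarith
      nlinarith [hMn_nonneg, hE2, hmom', mul_le_mul_of_nonneg_right hCρ hMn_nonneg]
    have hE1 := E1 n r hr0 hr1.le
    rw [← Htl r hr0 hr1.le] at hE1
    -- conclude
    have hrn_pos : 0 < r ^ n := lt_of_lt_of_le (Real.exp_pos _) hrpow
    have hWr_pos : 0 < tl ω r := hpos r ⟨hr0, hr1⟩
    have hfinal : tl ω r ≤ 2*C*B * tl ω ρ := by
      have h1 : r ^ n * tl ω r ≤ 2*C * tl ω ρ := le_trans hE1 hkey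
      have h2 : Real.exp (-(2*K+2)) * tl ω r ≤ 2*C * tl ω ρ :=
        le_trans (mul_le_mul_of_nonneg_right hrpow hWr_pos.le) h1
      have h3 := mul_le_mul_of_nonneg_left h2 (le_trans zero_le_one hB1)
      calc tl ω r = (Real.exp (-(2*K+2)) * B) * tl ω r := by rw [hBinv, one_mul]
        _ = B * (Real.exp (-(2*K+2)) * tl ω r) := by ring
        _ ≤ B * (2*C * tl ω ρ) := h3
        _ = 2*C*B * tl ω ρ := by ring
    refine hfinal.trans ?_
    exact mul_le_mul_of_nonneg_right (le_max_left _ _) hWρpos.le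
end

section
/- Let 1 < p < ∞ and p' = p/(p-1). Let ω and ν be nonnegative integrable functions on [0,1) with ŵ(t) = ∫_t^1 ω, ν̂(t) = ∫_t^1 ν both positive on [0,1). If sup_{0<r<1} (1 + ∫_0^r ν̂(t)/ŵ(t)^p dt)^{1/p} · (∫_r^1 (ω(t)/ν̂(t)^{1/p})^{p'} dt)^{1/p'} < ∞, then sup_{0<r<1} ν̂(r)^{1/p}(1-r)^{1/p}/ŵ(r) · (∫_r^1 (ω(t)/ν̂(t)^{1/p})^{p'} dt)^{1/p'} < ∞. -/
open MeasureTheory Set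

theorem stmt7 (p p' : ℝ) (hp : 1 < p) (hp' : p' = p / (p - 1))
    (ω ν : ℝ → ℝ)
    (hωnn : ∀ t ∈ Ico (0:ℝ) 1, 0 ≤ ω t) (hωint : IntegrableOn ω (Ico (0:ℝ) 1))
    (hνnn : ∀ t ∈ Ico (0:ℝ) 1, 0 ≤ ν t) (hνint : IntegrableOn ν (Ico (0:ℝ) 1))
    (hωpos : ∀ r ∈ Ico (0:ℝ) 1, 0 < tl ω r)
    (hνpos : ∀ r ∈ Ico (0:ℝ) 1, 0 < tl ν r)
    (C : ℝ) (hC : 1 ≤ C)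
    (hdbl : ∀ r ∈ Ico (0:ℝ) 1, tl ω r ≤ C * tl ω ((1 + r) / 2))
    (hsup : ∃ M : ℝ, ∀ r ∈ Ioo (0:ℝ) 1,
      (1 + ∫ t in (0:ℝ)..r, tl ν t / (tl ω t) ^ p) ^ (1/p) *
        (∫ t in r..1, (ω t / (tl ν t) ^ (1/p)) ^ p') ^ (1/p') ≤ M) :
    ∃ M' : ℝ, ∀ r ∈ Ioo (0:ℝ) 1,
      (tl ν r) ^ (1/p) * (1 - r) ^ (1/p) / tl ω r *
        (∫ t in r..1, (ω t / (tl ν t) ^ (1/p)) ^ p') ^ (1/p') ≤ M' := by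
  obtain ⟨M, hM⟩ := hsup
  have hpp : (0:ℝ) < p := lt_trans one_pos hp
  have hp'pos : 0 < p' := by rw [hp']; exact div_pos hpp (by linarith)
  -- integrability on Icc 0 1
  have hωI : IntegrableOn ω (Icc (0:ℝ) 1) :=
    (integrableOn_Icc_iff_integrableOn_Ico).2 hωint
  have hνI : IntegrableOn ν (Icc (0:ℝ) 1) :=
    (integrableOn_Icc_iff_integrableOn_Ico).2 hνint
  -- interval integrability on subintervals of [0,1]
  have hII : ∀ (f : ℝ → ℝ), IntegrableOn f (Icc (0:ℝ) 1) →
      ∀ a b : ℝ, a ∈ Icc (0:ℝ) 1 → b ∈ Icc (0:ℝ) 1 →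
      IntervalIntegrable f volume a b := by
    intro f hf a b ha hb
    exact (hf.mono_set (uIcc_subset_Icc ha hb)).intervalIntegrable
  -- antitonicity of tails
  have hanti : ∀ (f : ℝ → ℝ), (∀ t ∈ Ico (0:ℝ) 1, 0 ≤ f t) →
      IntegrableOn f (Icc (0:ℝ) 1) →
      ∀ a b : ℝ, 0 ≤ a → a ≤ b → b < 1 → tl f b ≤ tl f a := by
    intro f hnn hf a b ha hab hb1
    have h1 : (∫ s in a..b, f s) + tl f b = tl f a :=
      intervalIntegral.integral_add_adjacent_intervals
        (hII f hf a b ⟨ha, by linarith⟩ ⟨by linarith, hb1.le⟩)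
        (hII f hf b 1 ⟨by linarith, hb1.le⟩ ⟨zero_le_one, le_refl 1⟩)
    have h2 : 0 ≤ ∫ s in a..b, f s :=
      intervalIntegral.integral_nonneg hab
        (fun u hu => hnn u ⟨le_trans ha hu.1, lt_of_le_of_lt hu.2 hb1⟩)
    linarith
  -- continuity of tails
  have hcont : ∀ (f : ℝ → ℝ), IntegrableOn f (Icc (0:ℝ) 1) →
      ContinuousOn (tl f) (Icc (0:ℝ) 1) := by
    intro f hf
    have h := intervalIntegral.continuousOn_primitive_interval (a := (1:ℝ)) (b := (0:ℝ))
      (μ := volume) (f := f) (by rwa [uIcc_comm, uIcc_of_le zero_le_one])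
    rw [uIcc_comm, uIcc_of_le zero_le_one] at h
    have : ContinuousOn (fun x => -(∫ t in (1:ℝ)..x, f t)) (Icc (0:ℝ) 1) := h.neg
    refine this.congr fun x hx => ?_
    simp only [tl]
    rw [intervalIntegral.integral_symm 1 x]
  -- positivity of tails on [0,1)
  -- the key function
  set g : ℝ → ℝ := fun t => tl ν t / (tl ω t) ^ p with hg
  have hgcont : ∀ r : ℝ, r < 1 → ContinuousOn g (Icc (0:ℝ) r) := by
    intro r hr
    have hsub : Icc (0:ℝ) r ⊆ Icc (0:ℝ) 1 := Icc_subset_Icc le_rfl hr.le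
    have hsub' : ∀ x ∈ Icc (0:ℝ) r, x ∈ Ico (0:ℝ) 1 :=
      fun x hx => ⟨hx.1, lt_of_le_of_lt hx.2 hr⟩
    refine ContinuousOn.div ((hcont ν hνI).mono hsub)
      (((hcont ω hωI).mono hsub).rpow_const
        (fun x hx => Or.inl (ne_of_gt (hωpos x (hsub' x hx)))))
      (fun x hx => ne_of_gt (Real.rpow_pos_of_pos (hωpos x (hsub' x hx)) p))
  have hgnn : ∀ t ∈ Ico (0:ℝ) 1, 0 ≤ g t := by
    intro t ht
    exact div_nonneg (hνpos t ht).le (Real.rpow_nonneg (hωpos t ht).le p)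
  -- constants
  set B : ℝ := tl ν 0 / (tl ω (1/2)) ^ p with hB
  have hBnn : 0 ≤ B := by
    apply div_nonneg (hνpos 0 ⟨le_refl 0, one_pos⟩).le
    exact Real.rpow_nonneg (hωpos (1/2) ⟨by norm_num, by norm_num⟩).le p
  set K0 : ℝ := max (C ^ p) B with hK0
  have hK0nn : 0 ≤ K0 := le_trans (Real.rpow_nonneg (by linarith) p) (le_max_left _ _)
  refine ⟨K0 ^ (1/p) * M, fun r hr => ?_⟩
  have hr0 := hr.1
  have hr1 := hr.2
  have hrIco : r ∈ Ico (0:ℝ) 1 := ⟨hr0.le, hr1⟩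
  have hwr : 0 < tl ω r := hωpos r hrIco
  have hnr : 0 < tl ν r := hνpos r hrIco
  -- nonnegativity of the outer integral factor
  have hInn : 0 ≤ ∫ t in r..1, (ω t / (tl ν t) ^ (1/p)) ^ p' := by
    refine intervalIntegral.integral_nonneg hr1.le fun u hu => ?_
    rcases lt_or_eq_of_le hu.2 with h | h
    · exact Real.rpow_nonneg (div_nonneg (hωnn u ⟨le_trans hr0.le hu.1, h⟩)
        (Real.rpow_nonneg (hνpos u ⟨le_trans hr0.le hu.1, h⟩).le _)) p'
    · have : tl ν u = 0 := by rw [h]; simp [tl]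
      rw [this, Real.zero_rpow (by positivity : (1:ℝ)/p ≠ 0), div_zero,
        Real.zero_rpow (ne_of_gt hp'pos)]
  -- the integral 1 + ∫_0^r g is at least 1
  have hint0r : 0 ≤ ∫ t in (0:ℝ)..r, g t :=
    intervalIntegral.integral_nonneg hr0.le
      (fun u hu => hgnn u ⟨hu.1, lt_of_le_of_lt hu.2 hr1⟩)
  -- key inequality
  have key : tl ν r * (1 - r) / (tl ω r) ^ p ≤ K0 * (1 + ∫ t in (0:ℝ)..r, g t) := by
    have hgint : IntegrableOn g (Icc (0:ℝ) r) := (hgcont r hr1).integrableOn_Icc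
    rcases le_or_gt (1/2 : ℝ) r with hhalf | hhalf
    · -- r ≥ 1/2
      set a : ℝ := 2 * r - 1 with ha
      have ha0 : 0 ≤ a := by simp only [ha]; linarith
      have har : a ≤ r := by simp only [ha]; linarith
      have haIco : a ∈ Ico (0:ℝ) 1 := ⟨ha0, by simp only [ha]; linarith⟩
      have hdbl' : tl ω a ≤ C * tl ω r := by
        have := hdbl a haIco
        have heq : (1 + a) / 2 = r := by simp only [ha]; ring
        rwa [heq] at this
      have hwa : 0 < tl ω a := hωpos a haIco
      -- pointwise bound on [a, r]
      have hpw : ∀ t ∈ Icc a r, tl ν r / (tl ω a) ^ p ≤ g t := by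
        intro t ht
        have htIco : t ∈ Ico (0:ℝ) 1 := ⟨le_trans ha0 ht.1, lt_of_le_of_lt ht.2 hr1⟩
        have h1 : tl ν r ≤ tl ν t := hanti ν hνnn hνI t r htIco.1 ht.2 hr1
        have h2 : tl ω t ≤ tl ω a := hanti ω hωnn hωI a t ha0 ht.1 htIco.2
        have h3 : (tl ω t) ^ p ≤ (tl ω a) ^ p :=
          Real.rpow_le_rpow (hωpos t htIco).le h2 hpp.le
        have h4 : (0:ℝ) < (tl ω t) ^ p := Real.rpow_pos_of_pos (hωpos t htIco) p
        exact div_le_div₀ (le_trans hnr.le h1) h1 h4 h3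
      -- integral bound on [a, r]
      have hIab : IntervalIntegrable g volume a r :=
        (hgint.mono_set (by rw [uIcc_of_le har]; exact Icc_subset_Icc ha0 le_rfl)).intervalIntegrable
      have hstep1 : (r - a) * (tl ν r / (tl ω a) ^ p) ≤ ∫ t in a..r, g t := by
        have := intervalIntegral.integral_mono_on har
          (intervalIntegrable_const) hIab hpw
        rwa [intervalIntegral.integral_const, smul_eq_mul] at this
      have hI0a : IntervalIntegrable g volume 0 a :=
        (hgint.mono_set (by rw [uIcc_of_le ha0]; exact Icc_subset_Icc le_rfl har)).intervalIntegrable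
      have hsplit : (∫ t in (0:ℝ)..a, g t) + (∫ t in a..r, g t) = ∫ t in (0:ℝ)..r, g t :=
        intervalIntegral.integral_add_adjacent_intervals hI0a hIab
      have h0a : 0 ≤ ∫ t in (0:ℝ)..a, g t :=
        intervalIntegral.integral_nonneg ha0
          (fun u hu => hgnn u ⟨hu.1, lt_of_le_of_lt hu.2 haIco.2⟩)
      have hstep2 : (1 - r) * (tl ν r / (tl ω a) ^ p) ≤ ∫ t in (0:ℝ)..r, g t := by
        have hra : r - a = 1 - r := by simp only [ha]; ring
        rw [← hra]; linarith
      -- compare denominators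
      have hCp : (tl ω a) ^ p ≤ C ^ p * (tl ω r) ^ p := by
        rw [← Real.mul_rpow (by linarith) hwr.le]
        exact Real.rpow_le_rpow hwa.le hdbl' hpp.le
      have hfinal : tl ν r * (1 - r) / (C ^ p * (tl ω r) ^ p) ≤ ∫ t in (0:ℝ)..r, g t := by
        calc tl ν r * (1 - r) / (C ^ p * (tl ω r) ^ p)
            ≤ tl ν r * (1 - r) / (tl ω a) ^ p :=
              div_le_div_of_nonneg_left (mul_nonneg hnr.le (by linarith))
                (Real.rpow_pos_of_pos hwa p) hCp
            _ = (1 - r) * (tl ν r / (tl ω a) ^ p) := by ring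
            _ ≤ _ := hstep2
      have hCppos : (0:ℝ) < C ^ p := Real.rpow_pos_of_pos (by linarith) p
      have hwrp : (0:ℝ) < (tl ω r) ^ p := Real.rpow_pos_of_pos hwr p
      have heq : tl ν r * (1 - r) / (tl ω r) ^ p
          = C ^ p * (tl ν r * (1 - r) / (C ^ p * (tl ω r) ^ p)) := by
        field_simp
      calc tl ν r * (1 - r) / (tl ω r) ^ p
          = C ^ p * (tl ν r * (1 - r) / (C ^ p * (tl ω r) ^ p)) := heq
        _ ≤ C ^ p * ∫ t in (0:ℝ)..r, g t :=
            mul_le_mul_of_nonneg_left hfinal hCppos.le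
        _ ≤ K0 * (1 + ∫ t in (0:ℝ)..r, g t) := by
            apply mul_le_mul (le_max_left _ _) (by linarith) hint0r hK0nn
    · -- r < 1/2
      have hw12 : tl ω (1/2) ≤ tl ω r := hanti ω hωnn hωI r (1/2) hr0.le hhalf.le (by norm_num)
      have hn0 : tl ν r ≤ tl ν 0 := hanti ν hνnn hνI 0 r le_rfl hr0.le hr1
      have hw12pos : 0 < tl ω (1/2) := hωpos (1/2) ⟨by norm_num, by norm_num⟩
      have h3 : (tl ω (1/2)) ^ p ≤ (tl ω r) ^ p :=
        Real.rpow_le_rpow hw12pos.le hw12 hpp.le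
      have h4 : (0:ℝ) < (tl ω (1/2)) ^ p := Real.rpow_pos_of_pos hw12pos p
      have hstep : tl ν r * (1 - r) / (tl ω r) ^ p ≤ B := by
        rw [hB]
        have hnum : tl ν r * (1 - r) ≤ tl ν 0 :=
          le_trans (mul_le_of_le_one_right hnr.le (by linarith)) hn0
        exact div_le_div₀ (hνpos 0 ⟨le_rfl, one_pos⟩).le hnum h4 h3
      calc tl ν r * (1 - r) / (tl ω r) ^ p ≤ B := hstep
        _ = B * 1 := (mul_one B).symm
        _ ≤ K0 * (1 + ∫ t in (0:ℝ)..r, g t) := by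
            apply mul_le_mul (le_max_right _ _) (by linarith) zero_le_one hK0nn
  -- take p-th roots
  have hA : (tl ν r) ^ (1/p) * (1 - r) ^ (1/p) / tl ω r
      ≤ K0 ^ (1/p) * (1 + ∫ t in (0:ℝ)..r, g t) ^ (1/p) := by
    have hlhs : (tl ν r) ^ (1/p) * (1 - r) ^ (1/p) / tl ω r
        = (tl ν r * (1 - r) / (tl ω r) ^ p) ^ (1/p) := by
      rw [Real.div_rpow (mul_nonneg hnr.le (by linarith)) (Real.rpow_nonneg hwr.le p),
        Real.mul_rpow hnr.le (by linarith)]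
      congr 1
      rw [← Real.rpow_mul hwr.le, mul_one_div, div_self hpp.ne', Real.rpow_one]
    rw [hlhs, ← Real.mul_rpow hK0nn (by linarith)]
    exact Real.rpow_le_rpow
      (div_nonneg (mul_nonneg hnr.le (by linarith)) (Real.rpow_nonneg hwr.le p)) key
      (by positivity)
  calc (tl ν r) ^ (1/p) * (1 - r) ^ (1/p) / tl ω r *
        (∫ t in r..1, (ω t / (tl ν t) ^ (1/p)) ^ p') ^ (1/p')
      ≤ K0 ^ (1/p) * (1 + ∫ t in (0:ℝ)..r, g t) ^ (1/p) *
        (∫ t in r..1, (ω t / (tl ν t) ^ (1/p)) ^ p') ^ (1/p') := by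
        exact mul_le_mul_of_nonneg_right hA (Real.rpow_nonneg hInn _)
    _ = K0 ^ (1/p) * ((1 + ∫ t in (0:ℝ)..r, g t) ^ (1/p) *
        (∫ t in r..1, (ω t / (tl ν t) ^ (1/p)) ^ p') ^ (1/p')) := by ring
    _ ≤ K0 ^ (1/p) * M := by
        apply mul_le_mul_of_nonneg_left (hM r hr) (Real.rpow_nonneg hK0nn _)
end

section
/- Let ω ∈ D̂. Then for every r ∈ [1/2, 1), 1/ŵ(r) ≤ C·∫_{2r-1}^r dx/(ŵ(x)(1-x)) for a constant C depending only on ω. Consequently, for 0 ≤ t < s < 1, 1 + ∫_0^{st} dx/(ŵ(x)(1-x)) ≥ c/ŵ(t) for some constant c = c(ω) > 0. -/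
open MeasureTheory Set

lemma tl_anti (ω : ℝ → ℝ)
    (hnn : ∀ t ∈ Ico (0:ℝ) 1, 0 ≤ ω t)
    (hint : IntegrableOn ω (Ico (0:ℝ) 1))
    {a b : ℝ} (ha : 0 ≤ a) (hab : a ≤ b) (hb : b < 1) :
    tl ω b ≤ tl ω a := by
  have hi1 : IntervalIntegrable ω volume a b := by
    rw [intervalIntegrable_iff_integrableOn_Ioo_of_le hab]
    exact hint.mono_set (fun x hx => ⟨le_trans ha hx.1.le, lt_trans hx.2 hb⟩)
  have hi2 : IntervalIntegrable ω volume b 1 := by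
    rcases le_or_gt 1 b with h | h
    · have : b = 1 := le_antisymm hb.le h
      simp [this]
    rw [intervalIntegrable_iff_integrableOn_Ioo_of_le h.le]
    exact hint.mono_set (fun x hx => ⟨le_trans (le_trans ha hab) hx.1.le, hx.2⟩)
  have hsplit : (∫ s in a..b, ω s) + (∫ s in b..1, ω s) = ∫ s in a..1, ω s :=
    intervalIntegral.integral_add_adjacent_intervals hi1 hi2
  have hnonneg : 0 ≤ ∫ s in a..b, ω s := by
    apply intervalIntegral.integral_nonneg hab
    intro x hx
    exact hnn x ⟨le_trans ha hx.1, lt_of_le_of_lt hx.2 hb⟩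
  simp only [tl]
  linarith [hsplit]

theorem stmt8 (ω : ℝ → ℝ)
    (hnn : ∀ t ∈ Ico (0:ℝ) 1, 0 ≤ ω t)
    (hint : IntegrableOn ω (Ico (0:ℝ) 1))
    (hpos : ∀ r ∈ Ico (0:ℝ) 1, 0 < tl ω r)
    (C₀ : ℝ) (hC₀ : 1 ≤ C₀)
    (hdbl : ∀ r ∈ Ico (0:ℝ) 1, tl ω r ≤ C₀ * tl ω ((1 + r) / 2)) :
    (∃ C > (0:ℝ), ∀ r : ℝ, 1/2 ≤ r → r < 1 →
      1 / tl ω r ≤ C * ∫ x in (2*r - 1)..r, 1 / (tl ω x * (1 - x))) ∧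
    (∃ c > (0:ℝ), ∀ t s : ℝ, 0 ≤ t → t < s → s < 1 →
      c / tl ω t ≤ 1 + ∫ x in (0:ℝ)..(s*t), 1 / (tl ω x * (1 - x))) := by
  have hC₀0 : 0 < C₀ := lt_of_lt_of_le one_pos hC₀
  set f : ℝ → ℝ := fun x => 1 / (tl ω x * (1 - x)) with hf
  -- positivity of the denominator on [0, r], r < 1
  have hden : ∀ r : ℝ, r < 1 → ∀ x ∈ Icc (0:ℝ) r, 0 < tl ω x * (1 - x) := by
    intro r hr x hx
    have hx1 : x < 1 := lt_of_le_of_lt hx.2 hr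
    have := hpos x ⟨hx.1, hx1⟩
    have : 0 < tl ω x := this
    nlinarith
  -- monotonicity of f on [0, r]
  have hmono : ∀ r : ℝ, 0 ≤ r → r < 1 → MonotoneOn f (Icc (0:ℝ) r) := by
    intro r hr0 hr x hx y hy hxy
    have hy1 : y < 1 := lt_of_le_of_lt hy.2 hr
    have h1 : tl ω y ≤ tl ω x := tl_anti ω hnn hint hx.1 hxy hy1
    have h2 : tl ω y * (1 - y) ≤ tl ω x * (1 - x) := by
      have hposy := hpos y ⟨hy.1, hy1⟩
      have hx1 : x < 1 := lt_of_le_of_lt hx.2 hr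
      nlinarith
    exact one_div_le_one_div_of_le (hden r hr y hy) h2
  -- interval integrability of f on subintervals of [0, r]
  have hfi : ∀ r : ℝ, 0 ≤ r → r < 1 → ∀ a b : ℝ, 0 ≤ a → a ≤ b → b ≤ r →
      IntervalIntegrable f volume a b := by
    intro r hr0 hr a b ha hab hbr
    apply MonotoneOn.intervalIntegrable
    apply (hmono r hr0 hr).mono
    rw [uIcc_of_le hab]
    exact Icc_subset_Icc ha hbr
  -- Part 1
  have part1 : ∀ r : ℝ, 1/2 ≤ r → r < 1 →
      1 / tl ω r ≤ (2*C₀) * ∫ x in (2*r - 1)..r, f x := by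
    intro r hr2 hr1
    have ha0 : (0:ℝ) ≤ 2*r - 1 := by linarith
    have har : 2*r - 1 ≤ r := by linarith
    have hr0 : (0:ℝ) ≤ r := by linarith
    have hpr : 0 < tl ω r := hpos r ⟨hr0, hr1⟩
    have h1r : 0 < 1 - r := by linarith
    set M : ℝ := 1 / (2*C₀ * tl ω r * (1 - r)) with hM
    have hMpos : 0 < 2*C₀ * tl ω r * (1 - r) := by positivity
    have hbound : ∀ x ∈ Icc (2*r - 1) r, M ≤ f x := by
      intro x hx
      have hx1 : x < 1 := lt_of_le_of_lt hx.2 hr1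
      have hxa : tl ω x ≤ tl ω (2*r - 1) :=
        tl_anti ω hnn hint ha0 hx.1 hx1
      have hda : tl ω (2*r - 1) ≤ C₀ * tl ω ((1 + (2*r - 1))/2) :=
        hdbl (2*r - 1) ⟨ha0, by linarith⟩
      have heq : (1 + (2*r - 1))/2 = r := by ring
      rw [heq] at hda
      have h2 : tl ω x * (1 - x) ≤ 2*C₀ * tl ω r * (1 - r) := by
        have hposx := hpos x ⟨le_trans ha0 hx.1, hx1⟩
        nlinarith [hx.1, hx.2]
      exact one_div_le_one_div_of_le (hden r hr1 x ⟨le_trans ha0 hx.1, hx.2⟩) h2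
    have hint_ge : (r - (2*r - 1)) * M ≤ ∫ x in (2*r - 1)..r, f x := by
      have h := intervalIntegral.integral_mono_on har
        (intervalIntegrable_const (c := M))
        (hfi r hr0 hr1 (2*r-1) r ha0 har le_rfl) hbound
      rwa [intervalIntegral.integral_const, smul_eq_mul] at h
    have hval : (r - (2*r - 1)) * M = 1 / (2*C₀ * tl ω r) := by
      rw [hM]
      field_simp
      ring
    rw [hval] at hint_ge
    have : 1 / tl ω r = (2*C₀) * (1 / (2*C₀ * tl ω r)) := by
      field_simp
    rw [this]
    apply mul_le_mul_of_nonneg_left hint_ge (by positivity)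
  constructor
  · exact ⟨2*C₀, by positivity, part1⟩
  -- Part 2
  · refine ⟨min (tl ω (3/4)) (1/(2*C₀^2)), ?_, ?_⟩
    · have := hpos (3/4) ⟨by norm_num, by norm_num⟩
      positivity
    intro t s ht hts hs1
    set c : ℝ := min (tl ω (3/4)) (1/(2*C₀^2)) with hc
    have ht1 : t < 1 := lt_trans hts hs1
    have hpt : 0 < tl ω t := hpos t ⟨ht, ht1⟩
    have hst0 : 0 ≤ s * t := mul_nonneg (le_trans ht hts.le) ht
    have hst1 : s * t < 1 := by nlinarith
    have hintnn : 0 ≤ ∫ x in (0:ℝ)..(s*t), f x := by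
      apply intervalIntegral.integral_nonneg hst0
      intro x hx
      exact le_of_lt (by
        have := hden (s*t) hst1 x hx
        positivity)
    rcases lt_or_ge (s*t) (1/2) with hcase | hcase
    · -- s*t < 1/2 : then t < 3/4 and tl t ≥ tl(3/4) ≥ c
      have ht34 : t < 3/4 := by nlinarith
      have h1 : tl ω (3/4) ≤ tl ω t :=
        tl_anti ω hnn hint ht ht34.le (by norm_num)
      have hc1 : c ≤ tl ω t := le_trans (min_le_left _ _) h1
      have : c / tl ω t ≤ 1 := by
        rw [div_le_one hpt]; exact hc1
      linarith
    · -- s*t ≥ 1/2 : use part1 at r = s*t, and doubling to compare tl t and tl (s*t)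
      have hkey := part1 (s*t) hcase hst1
      have hpst : 0 < tl ω (s*t) := hpos (s*t) ⟨hst0, hst1⟩
      -- tl (s*t) ≤ C₀ * tl t
      have hmid : t ≤ (1 + s*t)/2 := by nlinarith
      have hmid1 : (1 + s*t)/2 < 1 := by linarith
      have h1 : tl ω ((1 + s*t)/2) ≤ tl ω t :=
        tl_anti ω hnn hint ht hmid hmid1
      have h2 : tl ω (s*t) ≤ C₀ * tl ω t := by
        have := hdbl (s*t) ⟨hst0, hst1⟩
        nlinarith
      -- 1/tl t ≤ C₀ / tl (s*t)
      have h3 : 1 / tl ω t ≤ C₀ / tl ω (s*t) := by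
        rw [div_le_div_iff₀ hpt hpst]
        nlinarith
      -- split the integral
      have ha0 : (0:ℝ) ≤ 2*(s*t) - 1 := by linarith
      have har : 2*(s*t) - 1 ≤ s*t := by linarith
      have hsplit : (∫ x in (0:ℝ)..(2*(s*t)-1), f x) + (∫ x in (2*(s*t)-1)..(s*t), f x)
          = ∫ x in (0:ℝ)..(s*t), f x :=
        intervalIntegral.integral_add_adjacent_intervals
          (hfi (s*t) hst0 hst1 0 (2*(s*t)-1) le_rfl ha0 har)
          (hfi (s*t) hst0 hst1 (2*(s*t)-1) (s*t) ha0 har le_rfl)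
      have hfirst : 0 ≤ ∫ x in (0:ℝ)..(2*(s*t)-1), f x := by
        apply intervalIntegral.integral_nonneg ha0
        intro x hx
        exact le_of_lt (by
          have := hden (s*t) hst1 x ⟨hx.1, le_trans hx.2 har⟩
          positivity)
      have h4 : (∫ x in (2*(s*t)-1)..(s*t), f x) ≤ ∫ x in (0:ℝ)..(s*t), f x := by
        linarith
      have hsteq : 2*(s*t) - 1 = 2*(s*t) - 1 := rfl
      -- combine
      have h5 : 1 / tl ω t ≤ 2*C₀^2 * ∫ x in (0:ℝ)..(s*t), f x := by
        calc 1 / tl ω t ≤ C₀ / tl ω (s*t) := h3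
          _ = C₀ * (1 / tl ω (s*t)) := by ring
          _ ≤ C₀ * ((2*C₀) * ∫ x in (2*(s*t)-1)..(s*t), f x) := by
              exact mul_le_mul_of_nonneg_left hkey hC₀0.le
          _ = 2*C₀^2 * ∫ x in (2*(s*t)-1)..(s*t), f x := by ring
          _ ≤ 2*C₀^2 * ∫ x in (0:ℝ)..(s*t), f x := by
              apply mul_le_mul_of_nonneg_left h4 (by positivity)
      have hc2 : c ≤ 1/(2*C₀^2) := min_le_right _ _
      have h6 : c / tl ω t ≤ (1/(2*C₀^2)) * (1 / tl ω t) := by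
        rw [div_eq_mul_one_div c]
        exact mul_le_mul_of_nonneg_right hc2 (by positivity)
      have h7 : (1/(2*C₀^2)) * (1 / tl ω t)
          ≤ (1/(2*C₀^2)) * (2*C₀^2 * ∫ x in (0:ℝ)..(s*t), f x) :=
        mul_le_mul_of_nonneg_left h5 (by positivity)
      have h8 : (1/(2*C₀^2)) * (2*C₀^2 * ∫ x in (0:ℝ)..(s*t), f x)
          = ∫ x in (0:ℝ)..(s*t), f x := by
        field_simp
      linarith
end

section
/- Let α > -1 and ω(t) = (α+1)(1-t²)^α on [0,1). Then sup_{a∈[0,1)} (1/(1-a))∫_a^1 ω(t)(1 + ∫_0^t ds/ŵ(s)) dt < ∞ if and only if α > 0, where ŵ(s) = ∫_s^1 ω(u)du. -/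
/-!
Write `ŵ(s) = ∫_s^1 ω` and `F(t) = ∫_0^t ds / ŵ(s)`. Since `ŵ' = -ω` and `F' = 1 / ŵ`, the
function `t ↦ t - ŵ(t) (1 + F(t))` is a primitive of `ω (1 + F)` on `[0, 1)`. As `ŵ (1 + F) ≥ 0`
and `F` is increasing, this gives integrability of `ω (1 + F)` on `[a, 1]` together with
`ŵ(a) (1 + F(a)) ≤ ∫_a^1 ω (1 + F) ≤ ŵ(a) (1 + F(a)) + (1 - a)`,
so only the size of `ŵ(a) (1 + F(a)) / (1 - a)` matters. On `[0, 1]` we have `ω(t) ≍ (1 - t)^α`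
and `ŵ(s) ≍ (1 - s)^(α + 1)` with constants `min 1 2^α`, `max 1 2^α`. For `α > 0` this makes the
quotient at most `2^α (1 + 1/α)`. For `α ≤ 0` it gives `ŵ(a) / ŵ(s) ≥ 2^α (1 - a) / (1 - s)` for
`s ≤ a`, so the quotient is at least `-2^α log (1 - a)`, which is unbounded.
-/

open MeasureTheory Set Filter Topology intervalIntegral

theorem intervalIntegrable_and_integral_le_of_forall_lt {f : ℝ → ℝ} {a b C : ℝ} (hab : a < b)
    (hf : ∀ x ∈ Ioo a b, 0 ≤ f x) (hint : ∀ c ∈ Ico a b, IntervalIntegrable f volume a c)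
    (hle : ∀ c ∈ Ico a b, ∫ x in a..c, f x ≤ C) :
    IntervalIntegrable f volume a b ∧ ∫ x in a..b, f x ≤ C := by
  set c : ℕ → ℝ := fun n => b - (b - a) * (1 / ((n : ℝ) + 1))
  have hc_mem : ∀ n, c n ∈ Ico a b := fun n => by
    have h1 : 0 < 1 / ((n : ℝ) + 1) := by positivity
    have h2 : 1 / ((n : ℝ) + 1) ≤ 1 := by
      rw [div_le_one (by positivity)]; linarith [(n.cast_nonneg : (0:ℝ) ≤ n)]
    constructor <;> nlinarith
  have hc_lim : Tendsto c atTop (𝓝 b) := by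
    have h := (tendsto_const_nhds (x := b)).sub
      ((tendsto_one_div_add_atTop_nhds_zero_nat (𝕜 := ℝ)).const_mul (b - a))
    rwa [mul_zero, sub_zero] at h
  have hfi : IntervalIntegrable f volume a b := by
    refine (intervalIntegrable_iff_integrableOn_Ioc_of_le hab.le).2 <|
      integrableOn_Ioc_of_intervalIntegral_norm_bounded_right (I := C)
        (fun n => (intervalIntegrable_iff_integrableOn_Ioc_of_le (hc_mem n).1).1
          (hint _ (hc_mem n))) hc_lim (Eventually.of_forall fun n => ?_)
    rw [← integral_of_le (hc_mem n).1]
    refine le_of_eq_of_le (integral_congr_ae ?_) (hle _ (hc_mem n))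
    refine Eventually.of_forall fun x hx => Real.norm_of_nonneg (hf x ?_)
    rw [uIoc_of_le (hc_mem n).1] at hx
    exact ⟨hx.1, hx.2.trans_lt (hc_mem n).2⟩
  refine ⟨hfi, le_of_tendsto (x := atTop) ?_ (Eventually.of_forall fun n => hle _ (hc_mem n))⟩
  have hcont := continuousOn_primitive_interval' hfi (left_mem_uIcc (a := a) (b := b))
  rw [uIcc_of_le hab.le] at hcont
  exact (hcont b (right_mem_Icc.2 hab.le)).tendsto.comp <|
    tendsto_nhdsWithin_iff.2
      ⟨hc_lim, Eventually.of_forall fun n => Ico_subset_Icc_self (hc_mem n)⟩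

section General

variable {α : ℝ}

theorem one_add_rpow_mem_Icc {u : ℝ} (hu : u ∈ Icc (0:ℝ) 1) :
    (1 + u) ^ α ∈ Icc (min 1 (2 ^ α)) (max 1 (2 ^ α)) := by
  rcases le_total 0 α with hα | hα
  · exact ⟨min_le_of_left_le (Real.one_le_rpow (by linarith [hu.1]) hα),
      le_max_of_le_right (Real.rpow_le_rpow (by linarith [hu.1]) (by linarith [hu.2]) hα)⟩
  · exact ⟨min_le_of_right_le (Real.rpow_le_rpow_of_nonpos (by linarith [hu.1])
        (by linarith [hu.2]) hα),
      le_max_of_le_left (Real.rpow_le_one_of_one_le_of_nonpos (by linarith [hu.1]) hα)⟩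

theorem integral_one_sub_rpow (hα : -1 < α) (s : ℝ) :
    ∫ u in s..1, (1 - u) ^ α = (1 - s) ^ (α + 1) / (α + 1) := by
  rw [integral_comp_sub_left (fun x => x ^ α) 1, integral_rpow (Or.inl hα), sub_self,
    Real.zero_rpow (by linarith), sub_zero]

theorem intervalIntegrable_one_sub_rpow (hα : -1 < α) (a b : ℝ) :
    IntervalIntegrable (fun u => (1 - u) ^ α) volume a b := by
  simpa using ((intervalIntegrable_rpow' (a := 1 - a) (b := 1 - b) hα).comp_sub_left 1)

theorem integral_one_div_one_sub {a : ℝ} (ha : a < 1) :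
    ∫ s in (0:ℝ)..a, 1 / (1 - s) = -Real.log (1 - a) := by
  rw [integral_comp_sub_left (fun x => 1 / x) 1, sub_zero,
    integral_one_div (notMem_uIcc_of_lt (sub_pos.2 ha) one_pos), div_eq_mul_inv,
    one_mul, Real.log_inv]

end General

namespace StandardWeight

noncomputable def weight (α t : ℝ) : ℝ := (α + 1) * (1 - t ^ 2) ^ α

noncomputable def weightHat (α s : ℝ) : ℝ := ∫ u in s..1, weight α u

noncomputable def weightHatInvIntegral (α t : ℝ) : ℝ := ∫ s in (0:ℝ)..t, 1 / weightHat α s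

variable {α : ℝ}

theorem weight_eq {u : ℝ} (hu : u ∈ Icc (-1:ℝ) 1) :
    weight α u = (α + 1) * (1 + u) ^ α * (1 - u) ^ α := by
  rw [weight, show 1 - u ^ 2 = (1 + u) * (1 - u) by ring,
    Real.mul_rpow (by linarith [hu.1]) (by linarith [hu.2]), mul_assoc]

theorem weight_le (hα : -1 < α) {u : ℝ} (hu : u ∈ Icc (0:ℝ) 1) :
    weight α u ≤ (α + 1) * max 1 (2 ^ α) * (1 - u) ^ α := by
  rw [weight_eq ⟨by linarith [hu.1], hu.2⟩]
  exact mul_le_mul_of_nonneg_right (mul_le_mul_of_nonneg_left (one_add_rpow_mem_Icc hu).2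
    (by linarith)) (Real.rpow_nonneg (sub_nonneg.2 hu.2) α)

theorem le_weight (hα : -1 < α) {u : ℝ} (hu : u ∈ Icc (0:ℝ) 1) :
    (α + 1) * min 1 (2 ^ α) * (1 - u) ^ α ≤ weight α u := by
  rw [weight_eq ⟨by linarith [hu.1], hu.2⟩]
  exact mul_le_mul_of_nonneg_right (mul_le_mul_of_nonneg_left (one_add_rpow_mem_Icc hu).1
    (by linarith)) (Real.rpow_nonneg (sub_nonneg.2 hu.2) α)

theorem weight_nonneg (hα : -1 < α) {u : ℝ} (hu : u ∈ Icc (0:ℝ) 1) : 0 ≤ weight α u :=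
  le_trans (mul_nonneg (mul_nonneg (by linarith) (le_min zero_le_one (by positivity)))
    (Real.rpow_nonneg (sub_nonneg.2 hu.2) α)) (le_weight hα hu)

theorem continuousOn_weight : ContinuousOn (weight α) (Ioo (-1) 1) := by
  refine continuousOn_const.mul (ContinuousOn.rpow_const (by fun_prop) fun u hu => Or.inl ?_)
  nlinarith [hu.1, hu.2]

theorem intervalIntegrable_weight (hα : -1 < α) {a b : ℝ} (hsub : uIcc a b ⊆ Icc 0 1) :
    IntervalIntegrable (weight α) volume a b := by
  refine ((intervalIntegrable_one_sub_rpow hα a b).const_mul ((α + 1) * max 1 (2 ^ α))).mono_fun'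
    (Measurable.aestronglyMeasurable (by unfold weight; fun_prop)) ?_
  filter_upwards [ae_restrict_mem measurableSet_uIoc] with u hu
  have hu' := hsub (uIoc_subset_uIcc hu)
  rw [Real.norm_of_nonneg (weight_nonneg hα hu')]
  exact weight_le hα hu'

theorem integral_const_mul_one_sub_rpow (hα : -1 < α) (m s : ℝ) :
    ∫ u in s..1, (α + 1) * m * (1 - u) ^ α = m * (1 - s) ^ (α + 1) := by
  rw [intervalIntegral.integral_const_mul, integral_one_sub_rpow hα]
  field_simp [show α + 1 ≠ 0 by linarith]

theorem le_weightHat (hα : -1 < α) {s : ℝ} (hs : s ∈ Icc (0:ℝ) 1) :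
    min 1 (2 ^ α) * (1 - s) ^ (α + 1) ≤ weightHat α s := by
  rw [← integral_const_mul_one_sub_rpow hα]
  exact integral_mono_on hs.2 ((intervalIntegrable_one_sub_rpow hα _ _).const_mul _)
    (intervalIntegrable_weight hα (by rw [uIcc_of_le hs.2]; exact Icc_subset_Icc hs.1 le_rfl))
    fun u hu => le_weight hα ⟨hs.1.trans hu.1, hu.2⟩

theorem weightHat_le (hα : -1 < α) {s : ℝ} (hs : s ∈ Icc (0:ℝ) 1) :
    weightHat α s ≤ max 1 (2 ^ α) * (1 - s) ^ (α + 1) := by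
  rw [← integral_const_mul_one_sub_rpow hα]
  exact integral_mono_on hs.2
    (intervalIntegrable_weight hα (by rw [uIcc_of_le hs.2]; exact Icc_subset_Icc hs.1 le_rfl))
    ((intervalIntegrable_one_sub_rpow hα _ _).const_mul _)
    fun u hu => weight_le hα ⟨hs.1.trans hu.1, hu.2⟩

theorem weightHat_pos (hα : -1 < α) {s : ℝ} (hs : s ∈ Ico (0:ℝ) 1) : 0 < weightHat α s :=
  lt_of_lt_of_le (mul_pos (lt_min one_pos (by positivity))
    (Real.rpow_pos_of_pos (sub_pos.2 hs.2) _)) (le_weightHat hα (Ico_subset_Icc_self hs))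

theorem hasDerivAt_weightHat (hα : -1 < α) {t : ℝ} (ht : t ∈ Ico (0:ℝ) 1) :
    HasDerivAt (weightHat α) (-weight α t) t := by
  have ht' : t ∈ Ioo (-1:ℝ) 1 := ⟨by linarith [ht.1], ht.2⟩
  exact integral_hasDerivAt_left
    (intervalIntegrable_weight hα (by rw [uIcc_of_le ht.2.le]; exact Icc_subset_Icc ht.1 le_rfl))
    (continuousOn_weight.stronglyMeasurableAtFilter isOpen_Ioo t ht')
    (continuousOn_weight.continuousAt (isOpen_Ioo.mem_nhds ht'))

theorem continuousOn_one_div_weightHat (hα : -1 < α) :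
    ContinuousOn (fun s => 1 / weightHat α s) (Ico 0 1) :=
  continuousOn_const.div
    (fun _ ht => (hasDerivAt_weightHat hα ht).continuousAt.continuousWithinAt)
    fun _ ht => (weightHat_pos hα ht).ne'

theorem intervalIntegrable_one_div_weightHat (hα : -1 < α) {a b : ℝ} (ha : a ∈ Ico (0:ℝ) 1)
    (hb : b ∈ Ico (0:ℝ) 1) : IntervalIntegrable (fun s => 1 / weightHat α s) volume a b :=
  ((continuousOn_one_div_weightHat hα).mono fun _ hx =>
    ⟨(le_min ha.1 hb.1).trans hx.1, hx.2.trans_lt (max_lt ha.2 hb.2)⟩).intervalIntegrable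

theorem continuousOn_weightHatInvIntegral (hα : -1 < α) {b : ℝ} (hb : b ∈ Ico (0:ℝ) 1) :
    ContinuousOn (weightHatInvIntegral α) (Icc 0 b) := by
  rw [← uIcc_of_le hb.1]
  refine continuousOn_primitive_interval (ContinuousOn.integrableOn_uIcc ?_)
  exact (continuousOn_one_div_weightHat hα).mono
    (by rw [uIcc_of_le hb.1]; exact Icc_subset_Ico_right hb.2)

theorem hasDerivAt_weightHatInvIntegral (hα : -1 < α) {t : ℝ} (ht : t ∈ Ioo (0:ℝ) 1) :
    HasDerivAt (weightHatInvIntegral α) (1 / weightHat α t) t :=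
  integral_hasDerivAt_right
    (intervalIntegrable_one_div_weightHat hα ⟨le_rfl, one_pos⟩ ⟨ht.1.le, ht.2⟩)
    (((continuousOn_one_div_weightHat hα).mono Ioo_subset_Ico_self).stronglyMeasurableAtFilter
      isOpen_Ioo t ht)
    ((continuousOn_one_div_weightHat hα).continuousAt (Ico_mem_nhds ht.1 ht.2))

theorem weightHatInvIntegral_le_of_le (hα : -1 < α) {a t : ℝ} (ha : 0 ≤ a) (hat : a ≤ t)
    (ht : t < 1) : weightHatInvIntegral α a ≤ weightHatInvIntegral α t := by
  have ha' : a ∈ Ico (0:ℝ) 1 := ⟨ha, hat.trans_lt ht⟩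
  have h0 : (0:ℝ) ∈ Ico (0:ℝ) 1 := ⟨le_rfl, one_pos⟩
  rw [← sub_nonneg, weightHatInvIntegral, weightHatInvIntegral,
    integral_interval_sub_left (intervalIntegrable_one_div_weightHat hα h0 ⟨ha.trans hat, ht⟩)
      (intervalIntegrable_one_div_weightHat hα h0 ha')]
  exact integral_nonneg hat fun s hs => (one_div_pos.2 (weightHat_pos hα
    ⟨ha.trans hs.1, hs.2.trans_lt ht⟩)).le

theorem weightHatInvIntegral_nonneg (hα : -1 < α) {t : ℝ} (ht : t ∈ Ico (0:ℝ) 1) :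
    0 ≤ weightHatInvIntegral α t := by
  simpa [weightHatInvIntegral] using weightHatInvIntegral_le_of_le hα le_rfl ht.1 ht.2

theorem continuousOn_weight_mul (hα : -1 < α) {b : ℝ} (hb : b ∈ Ico (0:ℝ) 1) :
    ContinuousOn (fun t => weight α t * (1 + weightHatInvIntegral α t)) (Icc 0 b) :=
  (continuousOn_weight.mono fun _ hx => ⟨by linarith [hx.1], hx.2.trans_lt hb.2⟩).mul
    (continuousOn_const.add (continuousOn_weightHatInvIntegral hα hb))

theorem integral_weight_mul_eq (hα : -1 < α) {a b : ℝ} (ha : 0 ≤ a) (hab : a ≤ b)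
    (hb : b < 1) :
    ∫ t in a..b, weight α t * (1 + weightHatInvIntegral α t) =
      (b - weightHat α b * (1 + weightHatInvIntegral α b)) -
        (a - weightHat α a * (1 + weightHatInvIntegral α a)) := by
  have hsub : Icc a b ⊆ Ico 0 1 := fun x hx => ⟨ha.trans hx.1, hx.2.trans_lt hb⟩
  refine integral_eq_sub_of_hasDerivAt_of_le
    (f := fun t => t - weightHat α t * (1 + weightHatInvIntegral α t)) hab ?_ (fun x hx => ?_) ?_
  · refine continuousOn_id.sub (ContinuousOn.mul ?_ (continuousOn_const.add
      ((continuousOn_weightHatInvIntegral hα ⟨ha.trans hab, hb⟩).mono (Icc_subset_Icc_left ha))))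
    exact fun x hx => (hasDerivAt_weightHat hα (hsub hx)).continuousAt.continuousWithinAt
  · have hx' : x ∈ Ioo (0:ℝ) 1 := ⟨ha.trans_lt hx.1, hx.2.trans hb⟩
    have hpos := weightHat_pos hα (Ioo_subset_Ico_self hx')
    have hG : HasDerivAt (fun t => t - weightHat α t * (1 + weightHatInvIntegral α t))
        (1 - (-weight α x * (1 + weightHatInvIntegral α x) +
          weightHat α x * (1 / weightHat α x))) x :=
      (hasDerivAt_id' x).sub ((hasDerivAt_weightHat hα (Ioo_subset_Ico_self hx')).mul
        ((hasDerivAt_weightHatInvIntegral hα hx').const_add 1))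
    refine hG.congr_deriv ?_
    rw [mul_one_div_cancel hpos.ne']
    ring
  · refine ContinuousOn.intervalIntegrable ?_
    rw [uIcc_of_le hab]
    exact (continuousOn_weight_mul hα ⟨ha.trans hab, hb⟩).mono (Icc_subset_Icc_left ha)

theorem intervalIntegrable_weight_mul_and_integral_le (hα : -1 < α) {a : ℝ}
    (ha : a ∈ Ico (0:ℝ) 1) :
    IntervalIntegrable (fun t => weight α t * (1 + weightHatInvIntegral α t)) volume a 1 ∧
      ∫ t in a..1, weight α t * (1 + weightHatInvIntegral α t) ≤
        weightHat α a * (1 + weightHatInvIntegral α a) + (1 - a) := by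
  refine intervalIntegrable_and_integral_le_of_forall_lt ha.2 (fun x hx => ?_) (fun c hc => ?_)
    (fun c hc => ?_)
  · have hx' : x ∈ Ico (0:ℝ) 1 := ⟨ha.1.trans hx.1.le, hx.2⟩
    exact mul_nonneg (weight_nonneg hα (Ico_subset_Icc_self hx'))
      (by linarith [weightHatInvIntegral_nonneg hα hx'])
  · have hc' : c ∈ Ico (0:ℝ) 1 := ⟨ha.1.trans hc.1, hc.2⟩
    refine ContinuousOn.intervalIntegrable ((continuousOn_weight_mul hα hc').mono ?_)
    rw [uIcc_of_le hc.1]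
    exact Icc_subset_Icc_left ha.1
  · have hc' : c ∈ Ico (0:ℝ) 1 := ⟨ha.1.trans hc.1, hc.2⟩
    rw [integral_weight_mul_eq hα ha.1 hc.1 hc.2]
    have := mul_nonneg (weightHat_pos hα hc').le
      (by linarith [weightHatInvIntegral_nonneg hα hc'] : 0 ≤ 1 + weightHatInvIntegral α c)
    linarith [hc.2]

theorem weightHat_mul_le_integral (hα : -1 < α) {a : ℝ} (ha : a ∈ Ico (0:ℝ) 1) :
    weightHat α a * (1 + weightHatInvIntegral α a) ≤
      ∫ t in a..1, weight α t * (1 + weightHatInvIntegral α t) := by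
  have hw : IntervalIntegrable (weight α) volume a 1 :=
    intervalIntegrable_weight hα (by rw [uIcc_of_le ha.2.le]; exact Icc_subset_Icc ha.1 le_rfl)
  rw [weightHat, ← intervalIntegral.integral_mul_const]
  refine integral_mono_on_of_le_Ioo ha.2.le (hw.mul_const _)
    (intervalIntegrable_weight_mul_and_integral_le hα ha).1 fun t ht => ?_
  exact mul_le_mul_of_nonneg_left
    (by linarith [weightHatInvIntegral_le_of_le hα ha.1 ht.1.le ht.2])
    (weight_nonneg hα ⟨ha.1.trans ht.1.le, ht.2.le⟩)

theorem weightHatInvIntegral_le_of_pos (hα : 0 < α) {t : ℝ} (ht : t ∈ Ico (0:ℝ) 1) :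
    weightHatInvIntegral α t ≤ ((1 - t) ^ (-α) - 1) / α := by
  have hα' : -1 < α := by linarith
  have hmin : min 1 ((2:ℝ) ^ α) = 1 := min_eq_left (Real.one_le_rpow one_le_two hα.le)
  have hcont : ContinuousOn (fun s : ℝ => (1 - s) ^ (-(α + 1))) (uIcc 0 t) := by
    refine ContinuousOn.rpow_const (by fun_prop) fun s hs => Or.inl (sub_ne_zero.2 ?_)
    rw [uIcc_of_le ht.1] at hs
    exact (hs.2.trans_lt ht.2).ne'
  calc weightHatInvIntegral α t ≤ ∫ s in (0:ℝ)..t, (1 - s) ^ (-(α + 1)) := by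
        refine integral_mono_on ht.1
          (intervalIntegrable_one_div_weightHat hα' ⟨le_rfl, one_pos⟩ ht)
          hcont.intervalIntegrable fun s hs => ?_
        have hs1 : 0 < 1 - s := sub_pos.2 (hs.2.trans_lt ht.2)
        have h := le_weightHat hα' ⟨hs.1, hs.2.trans ht.2.le⟩
        rw [hmin, one_mul] at h
        rw [Real.rpow_neg hs1.le, ← one_div]
        exact one_div_le_one_div_of_le (Real.rpow_pos_of_pos hs1 _) h
    _ = ((1 - t) ^ (-α) - 1) / α := by
        rw [integral_comp_sub_left (fun x => x ^ (-(α + 1))) 1, sub_zero,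
          integral_rpow (Or.inr ⟨by intro h; linarith,
            notMem_uIcc_of_lt (sub_pos.2 ht.2) one_pos⟩), show -(α + 1) + 1 = -α by ring,
          Real.one_rpow]
        field_simp
        ring

theorem weightHat_mul_le_of_pos (hα : 0 < α) {a : ℝ} (ha : a ∈ Ico (0:ℝ) 1) :
    weightHat α a * (1 + weightHatInvIntegral α a) ≤ 2 ^ α * (1 + 1 / α) * (1 - a) := by
  have hα' : -1 < α := by linarith
  have h1a : 0 < 1 - a := sub_pos.2 ha.2
  have hmax : max 1 ((2:ℝ) ^ α) = 2 ^ α := max_eq_right (Real.one_le_rpow one_le_two hα.le)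
  set x := (1 - a) ^ α
  have hx0 : 0 < x := Real.rpow_pos_of_pos h1a α
  have hx1 : x ≤ 1 := Real.rpow_le_one h1a.le (by linarith [ha.1]) hα.le
  have hw : weightHat α a ≤ 2 ^ α * x * (1 - a) := by
    have h := weightHat_le hα' (Ico_subset_Icc_self ha)
    rwa [hmax, Real.rpow_add_one h1a.ne', ← mul_assoc] at h
  have hF : weightHatInvIntegral α a ≤ (x⁻¹ - 1) / α := by
    have h := weightHatInvIntegral_le_of_pos hα ha
    rwa [Real.rpow_neg h1a.le] at h
  calc weightHat α a * (1 + weightHatInvIntegral α a)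
      ≤ 2 ^ α * x * (1 - a) * (1 + (x⁻¹ - 1) / α) :=
        mul_le_mul hw (by linarith) (by linarith [weightHatInvIntegral_nonneg hα' ha])
          (by positivity)
    _ = 2 ^ α * (1 - a) * (x + (1 - x) / α) := by field_simp
    _ ≤ 2 ^ α * (1 + 1 / α) * (1 - a) := by
        have : (1 - x) / α ≤ 1 / α := by gcongr; linarith
        rw [mul_right_comm]
        gcongr

theorem le_weightHat_div_weightHat_of_nonpos (hα : -1 < α) (hα0 : α ≤ 0) {s a : ℝ}
    (hs : 0 ≤ s) (hsa : s ≤ a) (ha : a < 1) :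
    2 ^ α * ((1 - a) / (1 - s)) ≤ weightHat α a / weightHat α s := by
  have h1a : 0 < 1 - a := sub_pos.2 ha
  have h1s : 0 < 1 - s := by linarith
  have hle : 2 ^ α ≤ (1:ℝ) := Real.rpow_le_one_of_one_le_of_nonpos one_le_two hα0
  have hlow := le_weightHat hα ⟨hs.trans hsa, ha.le⟩
  have hup := weightHat_le hα ⟨hs, hsa.trans ha.le⟩
  rw [min_eq_right hle] at hlow
  rw [max_eq_left hle, one_mul] at hup
  calc 2 ^ α * ((1 - a) / (1 - s)) ≤ 2 ^ α * ((1 - a) / (1 - s)) ^ (α + 1) := by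
        gcongr
        simpa using Real.rpow_le_rpow_of_exponent_ge (by positivity)
          ((div_le_one h1s).2 (by linarith)) (by linarith : α + 1 ≤ 1)
    _ = 2 ^ α * (1 - a) ^ (α + 1) / (1 - s) ^ (α + 1) := by
        rw [Real.div_rpow h1a.le h1s.le, mul_div_assoc]
    _ ≤ weightHat α a / weightHat α s :=
        div_le_div₀ (hlow.trans' (by positivity)) hlow
          (weightHat_pos hα ⟨hs, hsa.trans_lt ha⟩) hup

theorem le_weightHat_mul_of_nonpos (hα : -1 < α) (hα0 : α ≤ 0) {a : ℝ}
    (ha : a ∈ Ico (0:ℝ) 1) :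
    2 ^ α * (1 - a) * -Real.log (1 - a) ≤ weightHat α a * (1 + weightHatInvIntegral α a) := by
  have hcont : ContinuousOn (fun s : ℝ => 2 ^ α * ((1 - a) / (1 - s))) (uIcc 0 a) := by
    refine continuousOn_const.mul (continuousOn_const.div (by fun_prop) fun s hs => ?_)
    refine sub_ne_zero.2 ?_
    rw [uIcc_of_le ha.1] at hs
    exact (hs.2.trans_lt ha.2).ne'
  calc 2 ^ α * (1 - a) * -Real.log (1 - a)
      = ∫ s in (0:ℝ)..a, 2 ^ α * ((1 - a) / (1 - s)) := by
        simp_rw [div_eq_mul_one_div (1 - a)]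
        rw [intervalIntegral.integral_const_mul, intervalIntegral.integral_const_mul,
          integral_one_div_one_sub ha.2, mul_assoc]
    _ ≤ ∫ s in (0:ℝ)..a, weightHat α a * (1 / weightHat α s) := by
        refine integral_mono_on ha.1 ?_ ?_ fun s hs => ?_
        · exact hcont.intervalIntegrable
        · exact (intervalIntegrable_one_div_weightHat hα ⟨le_rfl, one_pos⟩ ha).const_mul _
        · rw [mul_one_div]
          exact le_weightHat_div_weightHat_of_nonpos hα hα0 hs.1 hs.2 ha.2
    _ = weightHat α a * weightHatInvIntegral α a := intervalIntegral.integral_const_mul _ _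
    _ ≤ weightHat α a * (1 + weightHatInvIntegral α a) := by
        gcongr
        · exact (weightHat_pos hα ha).le
        · linarith

theorem average_le_of_pos (hα : 0 < α) {a : ℝ} (ha : a ∈ Ico (0:ℝ) 1) :
    1 / (1 - a) * ∫ t in a..1, weight α t * (1 + weightHatInvIntegral α t) ≤
      1 + 2 ^ α * (1 + 1 / α) := by
  have h1a : 0 < 1 - a := sub_pos.2 ha.2
  have hint := (intervalIntegrable_weight_mul_and_integral_le (α := α) (by linarith) ha).2
  have hQ := weightHat_mul_le_of_pos hα ha
  rw [one_div_mul_eq_div, div_le_iff₀ h1a]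
  linarith

theorem exists_lt_average_of_nonpos (hα : -1 < α) (hα0 : α ≤ 0) (M : ℝ) :
    ∃ a ∈ Ico (0:ℝ) 1,
      M < 1 / (1 - a) * ∫ t in a..1, weight α t * (1 + weightHatInvIntegral α t) := by
  have h2 : (0:ℝ) < 2 ^ α := by positivity
  set K := |M| / 2 ^ α + 1 with hK
  have hK0 : 0 < K := by positivity
  have hKM : M < 2 ^ α * K := by
    rw [hK, mul_add, mul_div_cancel₀ _ h2.ne', mul_one]
    linarith [le_abs_self M]
  have ha : 1 - Real.exp (-K) ∈ Ico (0:ℝ) 1 :=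
    ⟨by linarith [Real.exp_le_one_iff.2 (neg_nonpos.2 hK0.le)], by linarith [Real.exp_pos (-K)]⟩
  refine ⟨_, ha, ?_⟩
  have hlow := (le_weightHat_mul_of_nonpos hα hα0 ha).trans (weightHat_mul_le_integral hα ha)
  rw [sub_sub_cancel, Real.log_exp, neg_neg] at hlow
  rw [sub_sub_cancel, one_div_mul_eq_div, lt_div_iff₀ (Real.exp_pos _)]
  nlinarith [Real.exp_pos (-K)]

end StandardWeight

theorem stmt19 (α : ℝ) (hα : -1 < α) :
    (∃ M : ℝ, ∀ a ∈ Ico (0:ℝ) 1,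
      (1 / (1 - a)) * ∫ t in a..1, ((α + 1) * (1 - t^2) ^ α) *
        (1 + ∫ s in (0:ℝ)..t, 1 / (∫ u in s..1, (α + 1) * (1 - u^2) ^ α)) ≤ M)
    ↔ 0 < α := by
  constructor
  · rintro ⟨M, hM⟩
    by_contra! hα0
    obtain ⟨a, ha, hMa⟩ := StandardWeight.exists_lt_average_of_nonpos hα hα0 M
    exact (hMa.trans_le (hM a ha)).false
  · exact fun hα0 => ⟨_, fun a ha => StandardWeight.average_le_of_pos hα0 ha⟩
end
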